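/- Let H be any subgroup of U(d) and let H' be its centralizer in U(d). Then the intersection of the commutant of H^{×n} with the commutant of the permutation operators {P(σ) : σ a permutation of Fin n}, inside the algebra of matrices on (ℂ^d)^{⊗n}, equals the unital ℂ-subalgebra generated by Q(H') = {V^{⊗n} : V ∈ H'}; that is, the permutationally invariant subalgebra of Comm(H^{×n}) equals Alg(Q(H')). -/

import Mathlib

/-!
Everything in `Alg(Q(H'))` commutes with `H^{×n}` and with the permutation operators; the content
is the converse. If `X` commutes with every `V ⊗ 1 ⊗ ⋯ ⊗ 1` (in any slot, `V ∈ H`), then each block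
of `X` in each tensor slot lies in the centralizer `B` of `H` in `M_d(ℂ)`, and projecting onto `B`
slot by slot shows `X ∈ span (B ⊗ ⋯ ⊗ B)`. Permutation invariance makes `X` its own
symmetrization, and the polarization identity
`∑_σ M_{σ 1} ⊗ ⋯ ⊗ M_{σ n} = ∑_S (-1)^{n - |S|} (∑_{i ∈ S} M_i)^{⊗n}`
puts it in the span of the tensor powers `c^{⊗n}`, `c ∈ B`.

It remains to reach `c^{⊗n}` from tensor powers of unitaries of `B`, a `*`-algebra closed under
inverses. For skew-Hermitian `x ∈ B` the Cayley
transform `(1 + x)(1 - x)⁻¹` is a unitary of `B`, and `(1 + x) adj(1 - x)` is a multiple of it.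
Writing `y ∈ B` as `a + i b` with `a, b ∈ B` skew-Hermitian, the tensor power of
`(1 + a + z b) adj(1 - a - z b)` is polynomial in `z` and lies in the span for real `z`, hence also
at `z = i`. Inverting the Cayley transform, and rescaling `c` until `1 + c` is invertible, reaches
every `c ∈ B`.
-/

open Matrix

noncomputable section

/-- Matrices on the n-fold tensor power (ℂ^d)^{⊗n}. -/
abbrev MatN (d n : ℕ) := Matrix (Fin n → Fin d) (Fin n → Fin d) ℂ

/-- The n-fold tensor power V^{⊗n} of a matrix V on ℂ^d. -/
def tpow (d n : ℕ) (V : Matrix (Fin d) (Fin d) ℂ) : MatN d n :=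
  Matrix.of fun x y => ∏ i, V (x i) (y i)

/-- The tensor product V₁ ⊗ ⋯ ⊗ Vₙ of n matrices on ℂ^d. -/
def tensProd (d n : ℕ) (V : Fin n → Matrix (Fin d) (Fin d) ℂ) : MatN d n :=
  Matrix.of fun x y => ∏ i, V i (x i) (y i)

/-- The permutation operator P(σ) on (ℂ^d)^{⊗n}. -/
def permMat (d n : ℕ) (σ : Equiv.Perm (Fin n)) : MatN d n :=
  Matrix.of fun x y => if x = y ∘ ⇑σ⁻¹ then 1 else 0

/-- Q(G) : the collective action {V^{⊗n} : V ∈ G}. -/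
def Qset (d n : ℕ) (G : Subgroup (Matrix.unitaryGroup (Fin d) ℂ)) : Set (MatN d n) :=
  {M | ∃ V ∈ G, M = tpow d n ((V : Matrix.unitaryGroup (Fin d) ℂ) : Matrix (Fin d) (Fin d) ℂ)}

/-- H^{×n} : the set of tensor products V₁ ⊗ ⋯ ⊗ Vₙ with each Vᵢ ∈ H. -/
def groupTensorSet (d n : ℕ) (H : Subgroup (Matrix.unitaryGroup (Fin d) ℂ)) :
    Set (MatN d n) :=
  {W | ∃ V : Fin n → H,
    W = tensProd d n fun i => ((V i : Matrix.unitaryGroup (Fin d) ℂ) : Matrix (Fin d) (Fin d) ℂ)}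

open Finset

lemma sum_supset_neg_one_pow_card_compl {ι : Type*} [Fintype ι] [DecidableEq ι] (R : Finset ι) :
    ∑ S : Finset ι with R ⊆ S, (-1 : ℤ) ^ #Sᶜ = if R = univ then 1 else 0 :=
  calc ∑ S : Finset ι with R ⊆ S, (-1 : ℤ) ^ #Sᶜ = ∑ T ∈ Rᶜ.powerset, (-1 : ℤ) ^ #T := by
        refine sum_nbij' compl compl (fun S hS => ?_) (fun T hT => ?_) (fun S _ => compl_compl S)
          (fun T _ => compl_compl T) fun S _ => rfl
        · simpa using (mem_filter.mp hS).2
        · simpa [subset_compl_comm] using mem_powerset.mp hT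
    _ = if R = univ then 1 else 0 := by simp [sum_powerset_neg_one_pow_card]

lemma sum_perm_eq_sum_neg_one_pow {ι A : Type*} [Fintype ι] [DecidableEq ι] [AddCommGroup A]
    (F : (ι → ι) → A) :
    ∑ σ : Equiv.Perm ι, F σ
      = ∑ S : Finset ι, (-1 : ℤ) ^ #Sᶜ • ∑ p ∈ Fintype.piFinset fun _ => S, F p := by
  have hpi : ∀ S : Finset ι,
      Fintype.piFinset (fun _ => S) = univ.filter fun p : ι → ι => univ.image p ⊆ S := fun S => by
    ext p
    simp [Fintype.mem_piFinset, image_subset_iff]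
  symm
  calc ∑ S : Finset ι, (-1 : ℤ) ^ #Sᶜ • ∑ p ∈ Fintype.piFinset (fun _ => S), F p
      = ∑ p : ι → ι, (∑ S : Finset ι with univ.image p ⊆ S, (-1 : ℤ) ^ #Sᶜ) • F p := by
        simp_rw [hpi, sum_filter, smul_sum, sum_smul]
        rw [sum_comm]
        refine sum_congr rfl fun p _ => sum_congr rfl fun S _ => ?_
        split_ifs <;> simp
    _ = ∑ p : ι → ι with univ.image p = univ, F p := by
        simp_rw [sum_supset_neg_one_pow_card_compl, ite_smul, one_smul, zero_smul, sum_filter]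
    _ = ∑ σ : Equiv.Perm ι, F σ := by
        symm
        refine sum_bij (fun σ _ => ⇑σ) (fun σ _ => ?_) (fun σ _ τ _ h => DFunLike.coe_injective h)
          (fun p hp => ?_) fun _ _ => rfl
        · simp [image_univ_of_surjective σ.surjective]
        · have hsurj : Function.Surjective p := fun b => by
            have hb : b ∈ univ.image p := by rw [(mem_filter.mp hp).2]; exact mem_univ b
            simpa using hb
          exact ⟨Equiv.ofBijective p ⟨Finite.injective_iff_surjective.mpr hsurj, hsurj⟩,
            mem_univ _, rfl⟩

lemma sum_prod_mulSingle_mul {ι κ R : Type*} [Fintype ι] [DecidableEq ι] [Fintype κ]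
    [DecidableEq κ] [CommSemiring R] (i : ι) (a : Matrix κ κ R) (x : ι → κ) (f : (ι → κ) → R) :
    ∑ z, (∏ j, (Pi.mulSingle i a : ι → Matrix κ κ R) j (x j) (z j)) * f z
      = ∑ u, a (x i) u * f (Function.update x i u) := by
  have hzero : ∀ z ∉ univ.image (Function.update x i),
      (∏ j, (Pi.mulSingle i a : ι → Matrix κ κ R) j (x j) (z j)) * f z = 0 := by
    intro z hz
    obtain ⟨j, hji, hzj⟩ : ∃ j, j ≠ i ∧ x j ≠ z j := by
      by_contra! h
      refine hz (mem_image.mpr ⟨z i, mem_univ _, funext fun j => ?_⟩)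
      rcases eq_or_ne j i with rfl | hj
      · simp
      · simp [hj, h j hj]
    rw [prod_eq_zero (mem_univ j) (by simp [hji, one_apply, hzj]), zero_mul]
  rw [← sum_subset (subset_univ _) fun z _ hz => hzero z hz,
    sum_image fun u _ v _ h => Function.update_injective x i h]
  refine sum_congr rfl fun u _ => ?_
  rw [Fintype.prod_eq_single i fun j hj => by simp [hj]]
  simp

lemma sum_mul_prod_mulSingle {ι κ R : Type*} [Fintype ι] [DecidableEq ι] [Fintype κ]
    [DecidableEq κ] [CommSemiring R] (i : ι) (a : Matrix κ κ R) (y : ι → κ) (f : (ι → κ) → R) :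
    ∑ z, f z * ∏ j, (Pi.mulSingle i a : ι → Matrix κ κ R) j (z j) (y j)
      = ∑ u, f (Function.update y i u) * a u (y i) := by
  have htr : ∀ z : ι → κ, ∏ j, (Pi.mulSingle i a : ι → Matrix κ κ R) j (z j) (y j)
      = ∏ j, (Pi.mulSingle i aᵀ : ι → Matrix κ κ R) j (y j) (z j) :=
    fun z => prod_congr rfl fun j _ => by
      rcases eq_or_ne j i with rfl | hj
      · simp
      · simp [hj, one_apply, eq_comm]
  simp_rw [htr, mul_comm (f _), sum_prod_mulSingle_mul, transpose_apply]

namespace Matrix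

variable {ι 𝕜 : Type*} [Fintype ι] [DecidableEq ι] [RCLike 𝕜]

/-- `⁻¹` is `Matrix.inv`, which is `0` on singular matrices. -/
def cayley (x : Matrix ι ι 𝕜) : Matrix ι ι 𝕜 := (1 + x) * (1 - x)⁻¹

open scoped ComplexOrder in
lemma isUnit_one_sub_of_conjTranspose_eq_neg {x : Matrix ι ι 𝕜} (hx : xᴴ = -x) :
    IsUnit (1 - x) := by
  have hpd : ((1 - x)ᴴ * (1 - x)).PosDef := by
    have : (1 - x)ᴴ * (1 - x) = 1 + xᴴ * x := by
      rw [conjTranspose_sub, conjTranspose_one, hx]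
      noncomm_ring
    rw [this]
    exact PosDef.one.add_posSemidef (posSemidef_conjTranspose_mul_self x)
  have hdet := (isUnit_iff_isUnit_det _).mp hpd.isUnit
  rw [det_mul] at hdet
  exact (isUnit_iff_isUnit_det _).mpr (isUnit_of_mul_isUnit_right hdet)

lemma cayley_mem_unitaryGroup {x : Matrix ι ι 𝕜} (hx : xᴴ = -x) :
    cayley x ∈ unitaryGroup ι 𝕜 := by
  have hdet := (isUnit_iff_isUnit_det _).mp (isUnit_one_sub_of_conjTranspose_eq_neg hx)
  have hinv : ((1 - x)⁻¹)ᴴ * (1 + x) = 1 := by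
    simpa [conjTranspose_sub, hx, sub_eq_add_neg] using
      congrArg conjTranspose (mul_nonsing_inv (1 - x) hdet)
  rw [mem_unitaryGroup_iff', star_eq_conjTranspose, cayley, conjTranspose_mul,
    conjTranspose_add, conjTranspose_one, hx]
  calc ((1 - x)⁻¹)ᴴ * (1 + -x) * ((1 + x) * (1 - x)⁻¹)
      = (((1 - x)⁻¹)ᴴ * (1 + x)) * ((1 - x) * (1 - x)⁻¹) := by noncomm_ring
    _ = 1 := by rw [hinv, mul_nonsing_inv _ hdet, one_mul]

lemma one_add_mul_adjugate_one_sub {y : Matrix ι ι 𝕜} (hy : IsUnit (1 - y)) :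
    (1 + y) * adjugate (1 - y) = (1 - y).det • cayley y := by
  have hdet := (isUnit_iff_isUnit_det _).mp hy
  have hadj : adjugate (1 - y) = (1 - y).det • (1 - y)⁻¹ := by
    calc adjugate (1 - y) = (1 - y)⁻¹ * ((1 - y) * adjugate (1 - y)) := by
          rw [← mul_assoc, nonsing_inv_mul _ hdet, one_mul]
      _ = (1 - y).det • (1 - y)⁻¹ := by rw [mul_adjugate, Matrix.mul_smul, mul_one]
  rw [hadj, Matrix.mul_smul, cayley]

lemma isUnit_one_sub_and_cayley_eq {c : Matrix ι ι 𝕜} (hc : IsUnit (1 + c)) :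
    IsUnit (1 - (c - 1) * (1 + c)⁻¹) ∧ cayley ((c - 1) * (1 + c)⁻¹) = c := by
  have hdet := (isUnit_iff_isUnit_det _).mp hc
  have hleft : ((2⁻¹ : 𝕜) • (1 + c)) * (1 - (c - 1) * (1 + c)⁻¹) = 1 := by
    have h₁ : 1 - (c - 1) * (1 + c)⁻¹ = (2 : 𝕜) • (1 + c)⁻¹ := by
      calc 1 - (c - 1) * (1 + c)⁻¹ = ((1 + c) - (c - 1)) * (1 + c)⁻¹ := by
            rw [sub_mul (1 + c), mul_nonsing_inv _ hdet]
        _ = (2 : 𝕜) • (1 + c)⁻¹ := by rw [two_smul]; noncomm_ring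
    rw [h₁, smul_mul_smul_comm, mul_nonsing_inv _ hdet]
    norm_num
  refine ⟨(isUnit_iff_isUnit_det _).mpr (isUnit_det_of_left_inverse hleft), ?_⟩
  rw [cayley, inv_eq_left_inv hleft, Matrix.mul_smul, add_mul, one_mul, mul_assoc,
    nonsing_inv_mul _ hdet, mul_one, show 1 + c + (c - 1) = (2 : 𝕜) • c by rw [two_smul]; abel,
    smul_smul]
  norm_num

lemma nonsing_inv_mem_centralizer {α : Type*} [CommRing α] {S : Set (Matrix ι ι α)}
    {x : Matrix ι ι α} (hx : x ∈ S.centralizer) : x⁻¹ ∈ S.centralizer := by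
  intro g hg
  by_cases h : IsUnit x
  · obtain ⟨u, rfl⟩ := h
    rw [← coe_units_inv]
    exact (Commute.units_inv_right (hx g hg)).eq
  · simp [nonsing_inv_apply_not_isUnit _ (mt (isUnit_iff_isUnit_det x).mpr h)]

end Matrix

section TensorPowers

variable {d n : ℕ}

local notation "𝕄" => Matrix (Fin d) (Fin d) ℂ

lemma tensProd_mul (M N : Fin n → 𝕄) :
    tensProd d n M * tensProd d n N = tensProd d n (M * N) := by
  ext x y
  simp only [tensProd, mul_apply, of_apply, Pi.mul_apply, prod_univ_sum, Fintype.piFinset_univ,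
    prod_mul_distrib]

lemma tpow_eq_tensProd (V : 𝕄) : tpow d n V = tensProd d n fun _ => V :=
  rfl

lemma tpow_smul (s : ℂ) (V : 𝕄) : tpow d n (s • V) = s ^ n • tpow d n V := by
  ext x y
  simp [tpow, prod_mul_distrib]

lemma permMat_mul_apply (σ : Equiv.Perm (Fin n)) (X : MatN d n) (x y : Fin n → Fin d) :
    (permMat d n σ * X) x y = X (x ∘ σ) y := by
  simp [permMat, mul_apply, Equiv.Perm.inv_def, Equiv.eq_comp_symm, eq_comm]

lemma mul_permMat_apply (σ : Equiv.Perm (Fin n)) (X : MatN d n) (x y : Fin n → Fin d) :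
    (X * permMat d n σ) x y = X x (y ∘ ⇑σ⁻¹) := by
  simp [permMat, mul_apply]

lemma permMat_one : permMat d n 1 = 1 := by
  ext x y
  simp [permMat, one_apply]

lemma permMat_mul (σ τ : Equiv.Perm (Fin n)) :
    permMat d n (σ * τ) = permMat d n σ * permMat d n τ := by
  ext x y
  rw [permMat_mul_apply]
  simp only [permMat, of_apply, Equiv.Perm.inv_def, Equiv.eq_comp_symm]
  rfl

lemma permMat_mul_tensProd (σ : Equiv.Perm (Fin n)) (M : Fin n → 𝕄) :
    permMat d n σ * tensProd d n M = tensProd d n (M ∘ ⇑σ⁻¹) * permMat d n σ := by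
  ext x y
  rw [permMat_mul_apply, mul_permMat_apply]
  simp only [tensProd, of_apply, Function.comp_apply]
  exact Fintype.prod_equiv σ _ _ fun i => by simp

/-- The block of `X` acting on tensor factor `i`, the indices of the other factors being fixed
by `x` and `y`. -/
def slotBlock (i : Fin n) (x y : Fin n → Fin d) : MatN d n →ₗ[ℂ] 𝕄 where
  toFun X := of fun u v => X (Function.update x i u) (Function.update y i v)
  map_add' _ _ := rfl
  map_smul' _ _ := rfl

@[simp]
lemma slotBlock_apply (i : Fin n) (x y : Fin n → Fin d) (X : MatN d n) (u v : Fin d) :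
    slotBlock i x y X u v = X (Function.update x i u) (Function.update y i v) :=
  rfl

lemma commute_slotBlock_of_commute (i : Fin n) (a : 𝕄) (X : MatN d n)
    (h : tensProd d n (Pi.mulSingle i a) * X = X * tensProd d n (Pi.mulSingle i a))
    (x y : Fin n → Fin d) : a * slotBlock i x y X = slotBlock i x y X * a := by
  ext u v
  have := congr_fun₂ h (Function.update x i u) (Function.update y i v)
  simp only [mul_apply, tensProd, of_apply] at this
  rw [sum_prod_mulSingle_mul, sum_mul_prod_mulSingle] at this
  simpa [mul_apply] using this

lemma tensProd_single (x y : Fin n → Fin d) :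
    tensProd d n (fun i => single (x i) (y i) (1 : ℂ)) = single x y 1 := by
  ext u v
  simp [tensProd, single_apply, prod_boole, funext_iff, forall_and]

lemma slotBlock_tensProd (i : Fin n) (x y : Fin n → Fin d) (M : Fin n → 𝕄) :
    slotBlock i x y (tensProd d n M) = (∏ j ∈ univ.erase i, M j (x j) (y j)) • M i := by
  ext u v
  simp only [slotBlock_apply, tensProd, of_apply, Matrix.smul_apply, smul_eq_mul]
  rw [← mul_prod_erase univ _ (mem_univ i), mul_comm]
  simp only [Function.update_self]
  congr 1
  exact prod_congr rfl fun j hj => by simp [(mem_erase.mp hj).1]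

/-- `id ⊗ ⋯ ⊗ f ⊗ ⋯ ⊗ id`, with `f` acting on factor `i`. -/
def slotMap (i : Fin n) (f : 𝕄 →ₗ[ℂ] 𝕄) : MatN d n →ₗ[ℂ] MatN d n where
  toFun X := of fun x y => f (slotBlock i x y X) (x i) (y i)
  map_add' X Y := by ext; simp
  map_smul' c X := by ext; simp

lemma slotMap_eq_self (i : Fin n) (f : 𝕄 →ₗ[ℂ] 𝕄) (X : MatN d n)
    (hX : ∀ x y, f (slotBlock i x y X) = slotBlock i x y X) : slotMap i f X = X := by
  ext x y
  simp [slotMap, hX]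

lemma slotMap_tensProd (i : Fin n) (f : 𝕄 →ₗ[ℂ] 𝕄) (M : Fin n → 𝕄) :
    slotMap i f (tensProd d n M) = tensProd d n (Function.update M i (f (M i))) := by
  ext x y
  simp only [slotMap, LinearMap.coe_mk, AddHom.coe_mk, of_apply, slotBlock_tensProd, map_smul,
    Matrix.smul_apply, smul_eq_mul]
  simp only [tensProd, of_apply]
  rw [← mul_prod_erase univ _ (mem_univ i), mul_comm]
  simp only [Function.update_self]
  congr 1
  exact prod_congr rfl fun j hj => by simp [(mem_erase.mp hj).1]

def elementaryTensors (B : Submodule ℂ 𝕄) : Set (MatN d n) :=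
  {T | ∃ M : Fin n → 𝕄, (∀ i, M i ∈ B) ∧ T = tensProd d n M}

lemma mem_span_elementaryTensors (B : Submodule ℂ 𝕄) (X : MatN d n)
    (hX : ∀ i x y, slotBlock i x y X ∈ B) : X ∈ Submodule.span ℂ (elementaryTensors B) := by
  obtain ⟨W, hW⟩ := B.exists_isCompl
  set π := B.projection W hW
  have key : ∀ s : Finset (Fin n),
      X ∈ Submodule.span ℂ {T | ∃ M : Fin n → 𝕄, (∀ j ∈ s, M j ∈ B) ∧ T = tensProd d n M} := by
    intro s
    induction s using Finset.induction_on with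
    | empty =>
      rw [matrix_eq_sum_single X]
      refine Submodule.sum_mem _ fun x _ => Submodule.sum_mem _ fun y _ => ?_
      rw [← mul_one (X x y), ← smul_eq_mul, ← smul_single, ← tensProd_single]
      exact Submodule.smul_mem _ _ (Submodule.subset_span ⟨_, by simp, rfl⟩)
    | insert i s _ ih =>
      -- `slotMap i π` fixes `X` and moves the `i`-th factor of an elementary tensor into `B`.
      rw [← slotMap_eq_self i π X fun x y => B.projection_apply_of_mem_left hW (hX i x y)]
      have := Submodule.mem_map_of_mem (f := slotMap i π) ih
      rw [← Submodule.span_image] at this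
      refine Submodule.span_mono ?_ this
      rintro _ ⟨_, ⟨M, hM, rfl⟩, rfl⟩
      refine ⟨_, fun j hj => ?_, slotMap_tensProd i π M⟩
      rcases eq_or_ne j i with rfl | hji
      · simp [π]
      · simpa [hji] using hM j ((mem_insert.mp hj).resolve_left hji)
  simpa [elementaryTensors] using key univ

lemma tpow_sum (S : Finset (Fin n)) (M : Fin n → 𝕄) :
    tpow d n (∑ k ∈ S, M k) = ∑ p ∈ Fintype.piFinset fun _ => S, tensProd d n (M ∘ p) := by
  ext x y
  simp only [tpow, tensProd, of_apply, Matrix.sum_apply, prod_univ_sum, Function.comp_apply]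

lemma sum_perm_tensProd_eq_sum_tpow (M : Fin n → 𝕄) :
    ∑ σ : Equiv.Perm (Fin n), tensProd d n (M ∘ σ)
      = ∑ S : Finset (Fin n), (-1 : ℤ) ^ #Sᶜ • tpow d n (∑ k ∈ S, M k) := by
  simp_rw [tpow_sum]
  exact sum_perm_eq_sum_neg_one_pow fun p => tensProd d n (M ∘ p)

def symmetrizer : MatN d n →ₗ[ℂ] MatN d n :=
  ∑ σ : Equiv.Perm (Fin n), LinearMap.mulLeftRight ℂ (permMat d n σ, permMat d n σ⁻¹)

lemma symmetrizer_tensProd (M : Fin n → 𝕄) :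
    symmetrizer (tensProd d n M) = ∑ σ : Equiv.Perm (Fin n), tensProd d n (M ∘ σ) := by
  have hconj : ∀ σ : Equiv.Perm (Fin n),
      permMat d n σ * tensProd d n M * permMat d n σ⁻¹ = tensProd d n (M ∘ ⇑σ⁻¹) := fun σ => by
    rw [permMat_mul_tensProd, mul_assoc, ← permMat_mul, mul_inv_cancel, permMat_one, mul_one]
  simp only [symmetrizer, LinearMap.sum_apply, LinearMap.mulLeftRight_apply, hconj]
  exact Fintype.sum_equiv (Equiv.inv _) _ _ fun σ => rfl

lemma symmetrizer_eq_card_smul (X : MatN d n)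
    (hX : ∀ σ : Equiv.Perm (Fin n), permMat d n σ * X = X * permMat d n σ) :
    symmetrizer X = Fintype.card (Equiv.Perm (Fin n)) • X := by
  simp only [symmetrizer, LinearMap.sum_apply, LinearMap.mulLeftRight_apply, hX,
    mul_assoc, ← permMat_mul, mul_inv_cancel, permMat_one, mul_one, sum_const, card_univ]

lemma mem_span_tpow_of_commute_permMat (B : Submodule ℂ 𝕄) (X : MatN d n)
    (hX : X ∈ Submodule.span ℂ (elementaryTensors B))
    (hperm : ∀ σ : Equiv.Perm (Fin n), permMat d n σ * X = X * permMat d n σ) :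
    X ∈ Submodule.span ℂ (tpow d n '' B) := by
  have hsym : Submodule.span ℂ (elementaryTensors B)
      ≤ (Submodule.span ℂ (tpow d n '' B)).comap symmetrizer := by
    rw [Submodule.span_le]
    rintro _ ⟨M, hM, rfl⟩
    rw [SetLike.mem_coe, Submodule.mem_comap, symmetrizer_tensProd, sum_perm_tensProd_eq_sum_tpow]
    exact Submodule.sum_mem _ fun S _ => Submodule.smul_of_tower_mem _ _ <|
      Submodule.subset_span ⟨_, Submodule.sum_mem _ fun k _ => hM k, rfl⟩
  have hX' := hsym hX
  rw [Submodule.mem_comap, symmetrizer_eq_card_smul X hperm, ← Nat.cast_smul_eq_nsmul ℂ] at hX'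
  exact (Submodule.smul_mem_iff _ (Nat.cast_ne_zero.mpr Fintype.card_ne_zero)).mp hX'

open Polynomial in
lemma exists_polynomial_eval_eq (L : MatN d n →ₗ[ℂ] ℂ) (M : Matrix (Fin d) (Fin d) ℂ[X]) :
    ∃ P : ℂ[X], ∀ z, L (tpow d n (M.map (eval z))) = P.eval z := by
  refine ⟨∑ x, ∑ y, C (L (single x y 1)) * ∏ i, M (x i) (y i), fun z => ?_⟩
  conv_lhs => rw [matrix_eq_sum_single (tpow d n _)]
  have hsingle : ∀ (x y : Fin n → Fin d) (c : ℂ), single x y c = c • single x y (1 : ℂ) := by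
    intro x y c
    rw [smul_single, smul_eq_mul, mul_one]
  simp only [map_sum, eval_finsetSum]
  refine sum_congr rfl fun x _ => sum_congr rfl fun y _ => ?_
  rw [hsingle, map_smul, smul_eq_mul, eval_mul, eval_C, eval_prod, mul_comm]
  rfl

open Polynomial in
lemma tpow_map_eval_mem_of_forall_real (W : Submodule ℂ (MatN d n))
    (M : Matrix (Fin d) (Fin d) ℂ[X]) (h : ∀ t : ℝ, tpow d n (M.map (eval (t : ℂ))) ∈ W) (z : ℂ) :
    tpow d n (M.map (eval z)) ∈ W := by
  rw [← Subspace.forall_mem_dualAnnihilator_apply_eq_zero_iff]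
  intro L hL
  rw [Submodule.mem_dualAnnihilator] at hL
  obtain ⟨P, hP⟩ := exists_polynomial_eval_eq L M
  have hP0 : P = 0 := P.eq_zero_of_infinite_isRoot <|
    Set.infinite_of_injective_forall_mem Complex.ofReal_injective fun t => by
      simp [← hP, hL _ (h t)]
  rw [hP, hP0, eval_zero]

def unitaryTensorPowers (n : ℕ) (S : Set 𝕄) : Submodule ℂ (MatN d n) :=
  Submodule.span ℂ (tpow d n '' {u | u ∈ unitaryGroup (Fin d) ℂ ∧ u ∈ Subalgebra.centralizer ℂ S})

section UnitaryTensorPowers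

variable {S : Set (Matrix (Fin d) (Fin d) ℂ)}

lemma tpow_mul_adjugate_mem_of_skew {x : 𝕄} (hx : x ∈ Subalgebra.centralizer ℂ S)
    (hskew : xᴴ = -x) : tpow d n ((1 + x) * adjugate (1 - x)) ∈ unitaryTensorPowers n S := by
  have hcayley : cayley x ∈ Subalgebra.centralizer ℂ S :=
    mul_mem (add_mem (one_mem _) hx) (nonsing_inv_mem_centralizer (sub_mem (one_mem _) hx))
  rw [one_add_mul_adjugate_one_sub (isUnit_one_sub_of_conjTranspose_eq_neg hskew), tpow_smul]
  exact Submodule.smul_mem _ _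
    (Submodule.subset_span ⟨_, ⟨cayley_mem_unitaryGroup hskew, hcayley⟩, rfl⟩)

open Polynomial in
lemma tpow_mul_adjugate_mem (hS : ∀ a ∈ S, star a ∈ S) {y : 𝕄}
    (hy : y ∈ Subalgebra.centralizer ℂ S) :
    tpow d n ((1 + y) * adjugate (1 - y)) ∈ unitaryTensorPowers n S := by
  have hyH : yᴴ ∈ Subalgebra.centralizer ℂ S := Set.star_mem_centralizer' hS hy
  set a : 𝕄 := (2⁻¹ : ℂ) • (y - yᴴ)
  set b : 𝕄 := (-(Complex.I / 2)) • (y + yᴴ)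
  have hab : ∀ t : ℝ, a + (t : ℂ) • b ∈ Subalgebra.centralizer ℂ S := fun t =>
    add_mem (Subalgebra.smul_mem _ (sub_mem hy hyH) _)
      (Subalgebra.smul_mem _ (Subalgebra.smul_mem _ (add_mem hy hyH) _) _)
  have hab_skew : ∀ t : ℝ, (a + (t : ℂ) • b)ᴴ = -(a + (t : ℂ) • b) := fun t => by
    simp only [a, b, conjTranspose_add, conjTranspose_smul, conjTranspose_sub,
      conjTranspose_conjTranspose, Complex.star_def, map_inv₀, map_neg, map_div₀, Complex.conj_I,
      Complex.conj_ofReal, map_ofNat]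
    module
  let K : Matrix (Fin d) (Fin d) ℂ[X] := a.map C + (X : ℂ[X]) • b.map C
  have hK : ∀ z, ((1 + K) * adjugate (1 - K)).map (eval z)
      = (1 + (a + z • b)) * adjugate (1 - (a + z • b)) := fun z => by
    have : (evalRingHom z).mapMatrix K = a + z • b := by
      ext i j
      simp only [K, RingHom.mapMatrix_apply, map_apply, Matrix.add_apply, Matrix.smul_apply,
        coe_evalRingHom, eval_add, eval_C, smul_eq_mul, eval_mul, eval_X]
    rw [← coe_evalRingHom, ← RingHom.mapMatrix_apply, map_mul, map_add, map_one,
      RingHom.map_adjugate, map_sub, map_one, this]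
  have hy_eq : a + Complex.I • b = y := by
    simp only [a, b, smul_smul]
    match_scalars <;> linear_combination (-1 / 2 : ℂ) * Complex.I_sq
  have := tpow_map_eval_mem_of_forall_real (unitaryTensorPowers n S) ((1 + K) * adjugate (1 - K))
    (fun t => by rw [hK]; exact tpow_mul_adjugate_mem_of_skew (hab t) (hab_skew t)) Complex.I
  rwa [hK, hy_eq] at this

lemma tpow_mem_of_isUnit_one_add (hS : ∀ a ∈ S, star a ∈ S) {c : 𝕄}
    (hc : c ∈ Subalgebra.centralizer ℂ S) (hunit : IsUnit (1 + c)) :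
    tpow d n c ∈ unitaryTensorPowers n S := by
  obtain ⟨hunit', hcayley⟩ := isUnit_one_sub_and_cayley_eq hunit
  have hy : (c - 1) * (1 + c)⁻¹ ∈ Subalgebra.centralizer ℂ S :=
    mul_mem (sub_mem hc (one_mem _)) (nonsing_inv_mem_centralizer (add_mem (one_mem _) hc))
  have := tpow_mul_adjugate_mem (n := n) hS hy
  rw [one_add_mul_adjugate_one_sub hunit', hcayley, tpow_smul] at this
  exact (Submodule.smul_mem_iff _ (pow_ne_zero _ ((isUnit_iff_isUnit_det _).mp hunit').ne_zero)).mp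
    this

lemma tpow_mem_unitaryTensorPowers (hS : ∀ a ∈ S, star a ∈ S) {c : 𝕄}
    (hc : c ∈ Subalgebra.centralizer ℂ S) : tpow d n c ∈ unitaryTensorPowers n S := by
  obtain ⟨μ, hμ, hμ0⟩ : ∃ μ : ℂ, μ ∉ spectrum ℂ c ∧ μ ≠ 0 := by
    obtain ⟨μ, hμ⟩ := ((finite_spectrum c).union (Set.finite_singleton 0)).infinite_compl.nonempty
    simp only [Set.mem_compl_iff, Set.mem_union, Set.mem_singleton_iff, not_or] at hμ
    exact ⟨μ, hμ⟩
  have hunit : IsUnit (1 + (-μ⁻¹) • c) := by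
    have : 1 + (-μ⁻¹) • c = μ⁻¹ • (algebraMap ℂ 𝕄 μ - c) := by
      rw [Algebra.algebraMap_eq_smul_one, smul_sub, smul_smul, inv_mul_cancel₀ hμ0, one_smul,
        neg_smul, sub_eq_add_neg]
    rw [this]
    exact (spectrum.notMem_iff.mp hμ).smul (Units.mk0 μ⁻¹ (inv_ne_zero hμ0))
  have := tpow_mem_of_isUnit_one_add (n := n) hS (Subalgebra.smul_mem _ hc _) hunit
  rw [tpow_smul] at this
  exact (Submodule.smul_mem_iff _ (pow_ne_zero _ (neg_ne_zero.mpr (inv_ne_zero hμ0)))).mp this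

end UnitaryTensorPowers

section Centralizer

variable (H : Subgroup (unitaryGroup (Fin d) ℂ))

lemma star_mem_coe_image {a : 𝕄} (ha : a ∈ Subtype.val '' (H : Set (unitaryGroup (Fin d) ℂ))) :
    star a ∈ Subtype.val '' (H : Set (unitaryGroup (Fin d) ℂ)) := by
  obtain ⟨h, hh, rfl⟩ := ha
  exact ⟨h⁻¹, H.inv_mem hh, by rw [← Unitary.star_eq_inv]; rfl⟩

lemma mem_centralizer_iff_coe_mem_centralizer (V : unitaryGroup (Fin d) ℂ) :
    V ∈ Subgroup.centralizer (H : Set (unitaryGroup (Fin d) ℂ))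
      ↔ (V : 𝕄) ∈ Subalgebra.centralizer ℂ (Subtype.val '' (H : Set (unitaryGroup (Fin d) ℂ))) := by
  rw [Subgroup.mem_centralizer_iff, Subalgebra.mem_centralizer_iff, Set.forall_mem_image]
  exact forall₂_congr fun h _ => Subtype.ext_iff

lemma unitaryTensorPowers_le_span_Qset :
    unitaryTensorPowers n (Subtype.val '' (H : Set (unitaryGroup (Fin d) ℂ)))
      ≤ Submodule.span ℂ (Qset d n (Subgroup.centralizer (H : Set _))) := by
  refine Submodule.span_mono ?_
  rintro _ ⟨u, ⟨hu, hcu⟩, rfl⟩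
  exact ⟨⟨u, hu⟩, (mem_centralizer_iff_coe_mem_centralizer H _).mpr hcu, rfl⟩

lemma mem_span_Qset_of_commute (X : MatN d n)
    (hW : ∀ W ∈ groupTensorSet d n H, W * X = X * W)
    (hP : ∀ σ : Equiv.Perm (Fin n), permMat d n σ * X = X * permMat d n σ) :
    X ∈ Submodule.span ℂ (Qset d n (Subgroup.centralizer (H : Set _))) := by
  set B := Subalgebra.centralizer ℂ (Subtype.val '' (H : Set (unitaryGroup (Fin d) ℂ)))
  have hblock : ∀ i x y, slotBlock i x y X ∈ Subalgebra.toSubmodule B := by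
    intro i x y
    rw [Subalgebra.mem_toSubmodule, Subalgebra.mem_centralizer_iff]
    rintro _ ⟨h, hh, rfl⟩
    refine commute_slotBlock_of_commute i _ X (hW _ ⟨Pi.mulSingle i ⟨h, hh⟩, ?_⟩) x y
    congr 1
    funext j
    rcases eq_or_ne j i with rfl | hj
    · simp
    · simp [hj]
  have hsym := mem_span_tpow_of_commute_permMat _ X (mem_span_elementaryTensors _ X hblock) hP
  refine unitaryTensorPowers_le_span_Qset H (Submodule.span_le.mpr ?_ hsym)
  rintro _ ⟨c, hc, rfl⟩
  exact tpow_mem_unitaryTensorPowers (fun _ => star_mem_coe_image H) hc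

lemma adjoin_Qset_le_centralizer :
    Algebra.adjoin ℂ (Qset d n (Subgroup.centralizer (H : Set _))) ≤ Subalgebra.centralizer ℂ
      (groupTensorSet d n H ∪ Set.range (permMat d n)) := by
  refine Algebra.adjoin_le ?_
  rintro _ ⟨V, hV, rfl⟩
  rw [SetLike.mem_coe, Subalgebra.mem_centralizer_iff]
  rintro _ (⟨M, rfl⟩ | ⟨σ, rfl⟩)
  · rw [tpow_eq_tensProd, tensProd_mul, tensProd_mul]
    congr 1
    funext i
    exact congrArg Subtype.val (Subgroup.mem_centralizer_iff.mp hV _ (M i).2)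
  · rw [tpow_eq_tensProd, permMat_mul_tensProd]
    rfl

end Centralizer

end TensorPowers

theorem permutation_invariant_commutant_general (d n : ℕ)
    (H : Subgroup (Matrix.unitaryGroup (Fin d) ℂ)) :
    {X : MatN d n | ∀ W ∈ groupTensorSet d n H, W * X = X * W}
        ∩ {X : MatN d n | ∀ σ : Equiv.Perm (Fin n),
            permMat d n σ * X = X * permMat d n σ}
      = (Algebra.adjoin ℂ (Qset d n (Subgroup.centralizer (H : Set _)))
          : Set (MatN d n)) := by
  ext X
  refine ⟨fun ⟨hW, hP⟩ => Algebra.span_le_adjoin ℂ _ (mem_span_Qset_of_commute H X hW hP),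
    fun hX => ?_⟩
  have hX' := (Subalgebra.mem_centralizer_iff ℂ).mp (adjoin_Qset_le_centralizer H hX)
  exact ⟨fun W hW => hX' W (Or.inl hW), fun σ => hX' _ (Or.inr ⟨σ, rfl⟩)⟩

theorem permutation_invariant_commutant (d n : ℕ) (hd : 1 ≤ d) (hn : 1 ≤ n)
    (H : Subgroup (Matrix.unitaryGroup (Fin d) ℂ)) :
    {X : MatN d n | ∀ W ∈ groupTensorSet d n H, W * X = X * W}
        ∩ {X : MatN d n | ∀ σ : Equiv.Perm (Fin n),
            permMat d n σ * X = X * permMat d n σ}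
      = (Algebra.adjoin ℂ (Qset d n (Subgroup.centralizer (H : Set _)))
          : Set (MatN d n)) :=
  permutation_invariant_commutant_general d n H
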